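/- Hölder-type inequality for the Orlicz function Φ: for every c > 0 there is a constant C > 0 such that for every ball B of radius 1 in ℝⁿ, every d > 0, and all measurable functions f, g on B, one has ∫_B Φ(|f g|) dx / log(e + d) ≤ C ∫_B |f| dx + (C/d) ∫_B (e^{c|g|} − 1) dx. -/

import Mathlib

/-!
Write `L = log (e + d)`. Where `t ≤ L log (e + s t)`, dividing by `log (e + s t)` gives
`Φ (s t) ≤ L s` at once. Otherwise `t > L ≥ 1`, and `s t < exp (t / L)` while `d < exp L`; since
`L + t / L ≤ 1 + t` for `1 ≤ L ≤ t`, this gives `d s t ≤ e² exp (t - 1) ≤ e² (exp t - 1)`.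
Hence `Φ (s t) ≤ L s + e² (exp t - 1) / d`, which with `s = |f| / c`, `t = c |g|` integrates to
the theorem.
-/

open MeasureTheory

noncomputable def Phi (t : ℝ) : ℝ := t / Real.log (Real.exp 1 + t)

open Real

lemma one_le_log_exp_one_add {x : ℝ} (hx : 0 ≤ x) : 1 ≤ log (exp 1 + x) := by
  rw [le_log_iff_exp_le (by positivity)]
  linarith

lemma Phi_nonneg {x : ℝ} (hx : 0 ≤ x) : 0 ≤ Phi x :=
  div_nonneg hx (by linarith [one_le_log_exp_one_add hx])

lemma Phi_le_self {x : ℝ} (hx : 0 ≤ x) : Phi x ≤ x :=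
  div_le_self hx (one_le_log_exp_one_add hx)

lemma Phi_mul_le_of_le_mul_log {s t L : ℝ} (hs : 0 ≤ s) (ht : 0 ≤ t)
    (h : t ≤ L * log (exp 1 + s * t)) : Phi (s * t) ≤ L * s := by
  have hlog := one_le_log_exp_one_add (mul_nonneg hs ht)
  rw [Phi, div_le_iff₀ (by linarith)]
  calc s * t ≤ s * (L * log (exp 1 + s * t)) := mul_le_mul_of_nonneg_left h hs
    _ = L * s * log (exp 1 + s * t) := by ring

lemma add_div_le_one_add {L t : ℝ} (hL : 1 ≤ L) (hLt : L ≤ t) : L + t / L ≤ 1 + t := by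
  rw [← sub_nonneg]
  have key : 1 + t - (L + t / L) = (t - L) * (L - 1) / L := by field_simp; ring
  rw [key]
  have := sub_nonneg.mpr hLt
  have := sub_nonneg.mpr hL
  positivity

lemma exp_sub_one_le_exp_sub_one {t : ℝ} (ht : 1 ≤ t) : exp (t - 1) ≤ exp t - 1 := by
  have h1 : 1 ≤ exp (t - 1) := one_le_exp (by linarith)
  have h2 : exp t = exp (t - 1) * exp 1 := by rw [← exp_add, sub_add_cancel]
  nlinarith [exp_one_gt_two]

lemma Phi_mul_le_of_mul_log_lt {s t d : ℝ} (hs : 0 ≤ s) (ht : 0 ≤ t) (hd : 0 < d)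
    (h : log (exp 1 + d) * log (exp 1 + s * t) < t) :
    Phi (s * t) ≤ exp 2 * (exp t - 1) / d := by
  set L := log (exp 1 + d)
  have hL : 1 ≤ L := one_le_log_exp_one_add hd.le
  have hst : 0 ≤ s * t := mul_nonneg hs ht
  have hLt : L ≤ t := by nlinarith [one_le_log_exp_one_add hst]
  have hst_le : s * t ≤ exp (t / L) := by
    have : log (exp 1 + s * t) ≤ t / L := by
      rw [le_div_iff₀ (by linarith)]
      linarith
    calc s * t ≤ exp 1 + s * t := by linarith [exp_pos 1]
      _ = exp (log (exp 1 + s * t)) := (exp_log (by positivity)).symm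
      _ ≤ exp (t / L) := exp_le_exp.mpr this
  have hd_le : d ≤ exp L := by
    rw [exp_log (by positivity)]
    linarith [exp_pos 1]
  have key : d * (s * t) ≤ exp 2 * (exp t - 1) :=
    calc d * (s * t) ≤ exp L * exp (t / L) := mul_le_mul hd_le hst_le hst (exp_pos L).le
      _ = exp (L + t / L) := (exp_add _ _).symm
      _ ≤ exp (2 + (t - 1)) := exp_le_exp.mpr (by linarith [add_div_le_one_add hL hLt])
      _ = exp 2 * exp (t - 1) := exp_add _ _
      _ ≤ exp 2 * (exp t - 1) :=
        mul_le_mul_of_nonneg_left (exp_sub_one_le_exp_sub_one (by linarith)) (exp_pos 2).le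
  exact (Phi_le_self hst).trans (by rw [le_div_iff₀ hd]; linarith)

lemma Phi_mul_le {s t d : ℝ} (hs : 0 ≤ s) (ht : 0 ≤ t) (hd : 0 < d) :
    Phi (s * t) ≤ log (exp 1 + d) * s + exp 2 * (exp t - 1) / d := by
  have hLs : 0 ≤ log (exp 1 + d) * s :=
    mul_nonneg (zero_le_one.trans (one_le_log_exp_one_add hd.le)) hs
  have hE : 0 ≤ exp 2 * (exp t - 1) / d :=
    div_nonneg (mul_nonneg (exp_pos 2).le (sub_nonneg.mpr (one_le_exp ht))) hd.le
  rcases le_or_gt t (log (exp 1 + d) * log (exp 1 + s * t)) with h | h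
  · linarith [Phi_mul_le_of_le_mul_log hs ht h]
  · linarith [Phi_mul_le_of_mul_log_lt hs ht hd h]

lemma Phi_mul_le_log_mul {c d u v : ℝ} (hc : 0 < c) (hd : 0 < d) (hu : 0 ≤ u) (hv : 0 ≤ v) :
    Phi (u * v) ≤ log (exp 1 + d) *
      ((1 / c + exp 2) * u + (1 / c + exp 2) / d * (exp (c * v) - 1)) := by
  have hbound := Phi_mul_le (div_nonneg hu hc.le) (mul_nonneg hc.le hv) hd
  rw [show u / c * (c * v) = u * v by field_simp] at hbound
  set L := log (exp 1 + d)
  set w := (exp (c * v) - 1) / d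
  have hL : 1 ≤ L := one_le_log_exp_one_add hd.le
  have hw : 0 ≤ w := div_nonneg (sub_nonneg.mpr (one_le_exp (by positivity))) hd.le
  calc Phi (u * v) ≤ L * (u / c) + exp 2 * w := by rwa [mul_div_assoc] at hbound
    _ ≤ L * (u / c) + L * (exp 2 * u) + L * (w / c) + L * (exp 2 * w) := by
      have he := (exp_pos 2).le
      linarith [mul_nonneg (mul_nonneg he hu) (by linarith : (0:ℝ) ≤ L),
        mul_nonneg (div_nonneg hw hc.le) (by linarith : (0:ℝ) ≤ L),
        mul_nonneg (mul_nonneg he hw) (by linarith : (0:ℝ) ≤ L - 1)]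
    _ = _ := by ring

/-- Hölder-type inequality for the Orlicz function `Phi` on balls of radius 1. -/
theorem orlicz_holder (n : ℕ) (c : ℝ) (hc : 0 < c) :
    ∃ C > 0, ∀ (z : EuclideanSpace ℝ (Fin n)) (d : ℝ), 0 < d →
      ∀ f g : EuclideanSpace ℝ (Fin n) → ℝ, Measurable f → Measurable g →
        IntegrableOn f (Metric.ball z 1) →
        IntegrableOn (fun x => Real.exp (c * |g x|) - 1) (Metric.ball z 1) →
        (∫ x in Metric.ball z 1, Phi (|f x * g x|)) / Real.log (Real.exp 1 + d) ≤
          C * (∫ x in Metric.ball z 1, |f x|) +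
            (C / d) * ∫ x in Metric.ball z 1, (Real.exp (c * |g x|) - 1) := by
  set C := 1 / c + exp 2
  refine ⟨C, by positivity, fun z d hd f g _ _ hf hg => ?_⟩
  have hL : 1 ≤ log (exp 1 + d) := one_le_log_exp_one_add hd.le
  have hCf : IntegrableOn (fun x => C * |f x|) (Metric.ball z 1) := hf.abs.const_mul C
  have hCg := hg.const_mul (C / d)
  rw [div_le_iff₀ (by linarith)]
  calc ∫ x in Metric.ball z 1, Phi (|f x * g x|)
      ≤ ∫ x in Metric.ball z 1, log (exp 1 + d) *
          (C * |f x| + C / d * (exp (c * |g x|) - 1)) :=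
        integral_mono_of_nonneg (.of_forall fun x => Phi_nonneg (abs_nonneg _))
          ((hCf.add hCg).const_mul _) (.of_forall fun x => by
            simpa only [abs_mul] using
              Phi_mul_le_log_mul hc hd (abs_nonneg (f x)) (abs_nonneg (g x)))
    _ = _ := by
      rw [integral_const_mul, integral_add hCf hCg, integral_const_mul, integral_const_mul]
      ring
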